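/- If y(x) is a solution of the Painlevé III equation with three zero parameters y'' = y'^2/y - y'/x + b/x on a domain with x > 0, y ≠ 0, then the function obtained from the symmetry X₂ = (x ln x - 2x) ∂/∂x + y ln x ∂/∂y at the infinitesimal level satisfies the linearized equation; equivalently, the vector field X₂ = (x ln x - 2x) ∂_x + (y ln x) ∂_y is an infinitesimal point symmetry of y'' = y'^2/y - y'/x + b/x: the second prolongation of X₂ applied to the expression y'' - y'^2/y + y'/x - b/x vanishes on solutions. -/

import Mathlib

/-!
Since ξ and η do not depend on `p`, the total derivative `D_x` acts on them as `∂_x + p ∂_y`; this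
gives `D_x ξ = ln x - 1` and `η⁽¹⁾ = y / x + p`, which is affine in `p` with slope 1, so
`η⁽²⁾ = -y / x² + p / x + (2 - ln x) f` for every right-hand side `f`. With the partial derivatives
of `f = p² / y - p / x + b / x` the determining equation becomes a rational identity in
`x, y, p, ln x`.
-/

/-- Partial derivatives of a function of (x, y, p). -/
noncomputable def pdx3 (f : ℝ → ℝ → ℝ → ℝ) (x y p : ℝ) : ℝ := deriv (fun t => f t y p) x
noncomputable def pdy3 (f : ℝ → ℝ → ℝ → ℝ) (x y p : ℝ) : ℝ := deriv (fun t => f x t p) y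
noncomputable def pdp3 (f : ℝ → ℝ → ℝ → ℝ) (x y p : ℝ) : ℝ := deriv (fun t => f x y t) p

/-- Total derivative operator D_x = ∂_x + p ∂_y + f ∂_p along the ODE y'' = f(x,y,y'). -/
noncomputable def totalD (f g : ℝ → ℝ → ℝ → ℝ) (x y p : ℝ) : ℝ :=
  pdx3 g x y p + p * pdy3 g x y p + f x y p * pdp3 g x y p

/-- First prolongation coefficient η⁽¹⁾ = D_x η - p D_x ξ. -/
noncomputable def prol1 (f : ℝ → ℝ → ℝ → ℝ) (xi eta : ℝ → ℝ → ℝ) (x y p : ℝ) : ℝ :=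
  totalD f (fun x y _ => eta x y) x y p - p * totalD f (fun x y _ => xi x y) x y p

/-- Second prolongation coefficient (on solutions): η⁽²⁾ = D_x η⁽¹⁾ - f D_x ξ. -/
noncomputable def prol2 (f : ℝ → ℝ → ℝ → ℝ) (xi eta : ℝ → ℝ → ℝ) (x y p : ℝ) : ℝ :=
  totalD f (prol1 f xi eta) x y p - f x y p * totalD f (fun x y _ => xi x y) x y p

section TotalDerivative

variable {f : ℝ → ℝ → ℝ → ℝ} {x y p : ℝ}

theorem totalD_eq_of_hasDerivAt {g : ℝ → ℝ → ℝ → ℝ} {gx gy gp : ℝ}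
    (hx : HasDerivAt (fun t => g t y p) gx x) (hy : HasDerivAt (fun t => g x t p) gy y)
    (hp : HasDerivAt (fun t => g x y t) gp p) :
    totalD f g x y p = gx + p * gy + f x y p * gp := by
  rw [totalD, pdx3, pdy3, pdp3, hx.deriv, hy.deriv, hp.deriv]

theorem totalD_pointFunction_eq_of_hasDerivAt {h : ℝ → ℝ → ℝ} {dx dy : ℝ}
    (hx : HasDerivAt (fun t => h t y) dx x) (hy : HasDerivAt (fun t => h x t) dy y) :
    totalD f (fun x y _ => h x y) x y p = dx + p * dy := by
  rw [totalD_eq_of_hasDerivAt hx hy (hasDerivAt_const p (h x y)), mul_zero, add_zero]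

theorem prol1_eq_of_hasDerivAt {xi eta : ℝ → ℝ → ℝ} {xix xiy etax etay : ℝ}
    (hxix : HasDerivAt (fun t => xi t y) xix x) (hxiy : HasDerivAt (fun t => xi x t) xiy y)
    (hetax : HasDerivAt (fun t => eta t y) etax x) (hetay : HasDerivAt (fun t => eta x t) etay y) :
    prol1 f xi eta x y p = etax + p * etay - p * (xix + p * xiy) := by
  rw [prol1, totalD_pointFunction_eq_of_hasDerivAt hetax hetay,
    totalD_pointFunction_eq_of_hasDerivAt hxix hxiy]

end TotalDerivative

namespace PainleveIII

open Real

noncomputable def rhs (b : ℝ) : ℝ → ℝ → ℝ → ℝ := fun x y p => p ^ 2 / y - p / x + b / x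

noncomputable def xi : ℝ → ℝ → ℝ := fun x _ => x * log x - 2 * x

noncomputable def eta : ℝ → ℝ → ℝ := fun x y => y * log x

variable {f : ℝ → ℝ → ℝ → ℝ} {x y : ℝ} (b p : ℝ)

theorem hasDerivAt_rhs_x (hx : x ≠ 0) :
    HasDerivAt (fun t => rhs b t y p) ((p - b) / x ^ 2) x := by
  have hrhs : (fun t => rhs b t y p) = fun t => p ^ 2 / y + (b - p) * t⁻¹ := by
    ext t; simp only [rhs]; ring
  rw [hrhs]
  exact (((hasDerivAt_inv hx).const_mul (b - p)).const_add _).congr_deriv (by ring)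

theorem hasDerivAt_rhs_y (hy : y ≠ 0) :
    HasDerivAt (fun t => rhs b x t p) (-p ^ 2 / y ^ 2) y := by
  have hrhs : (fun t => rhs b x t p) = fun t => p ^ 2 * t⁻¹ + (b - p) / x := by
    ext t; simp only [rhs]; ring
  rw [hrhs]
  exact (((hasDerivAt_inv hy).const_mul (p ^ 2)).add_const _).congr_deriv (by ring)

theorem hasDerivAt_rhs_p :
    HasDerivAt (fun t => rhs b x y t) (2 * p / y - 1 / x) p :=
  ((((hasDerivAt_pow 2 p).div_const y).sub ((hasDerivAt_id p).div_const x)).add_const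
    (b / x)).congr_deriv (by simp)

theorem hasDerivAt_xi_x (hx : x ≠ 0) :
    HasDerivAt (fun t => xi t y) (log x - 1) x :=
  (((hasDerivAt_id x).mul (hasDerivAt_log hx)).sub ((hasDerivAt_id x).const_mul 2)).congr_deriv
    (by rw [id, mul_inv_cancel₀ hx]; ring)

theorem totalD_xi (hx : x ≠ 0) :
    totalD f (fun x y _ => xi x y) x y p = log x - 1 := by
  rw [totalD_pointFunction_eq_of_hasDerivAt (hasDerivAt_xi_x hx) (hasDerivAt_const y _),
    mul_zero, add_zero]

theorem hasDerivAt_eta_x (hx : x ≠ 0) : HasDerivAt (fun t => eta t y) (y / x) x :=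
  ((hasDerivAt_log hx).const_mul y).congr_deriv (div_eq_mul_inv y x).symm

theorem hasDerivAt_eta_y : HasDerivAt (fun t => eta x t) (log x) y :=
  ((hasDerivAt_id y).mul_const (log x)).congr_deriv (one_mul _)

theorem prol1_xi_eta (hx : x ≠ 0) : prol1 f xi eta x y p = y / x + p := by
  rw [prol1_eq_of_hasDerivAt (hasDerivAt_xi_x hx) (hasDerivAt_const y _) (hasDerivAt_eta_x hx)
    hasDerivAt_eta_y]
  ring

theorem prol2_xi_eta (hx : x ≠ 0) :
    prol2 f xi eta x y p = -y / x ^ 2 + p / x + (2 - log x) * f x y p := by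
  have hdx : HasDerivAt (fun t => prol1 f xi eta t y p) (-y / x ^ 2) x := by
    refine ((((hasDerivAt_inv hx).const_mul y).add_const p).congr_deriv (by ring))
      |>.congr_of_eventuallyEq ?_
    filter_upwards [eventually_ne_nhds hx] with t ht
    rw [prol1_xi_eta p ht, div_eq_mul_inv]
  have hdy : HasDerivAt (fun t => prol1 f xi eta x t p) (1 / x) y := by
    simp only [prol1_xi_eta _ hx]
    exact ((hasDerivAt_id y).div_const x).add_const p
  have hdp : HasDerivAt (fun t => prol1 f xi eta x y t) 1 p := by
    simp only [prol1_xi_eta _ hx]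
    exact (hasDerivAt_id p).const_add _
  rw [prol2, totalD_eq_of_hasDerivAt hdx hdy hdp, totalD_xi p hx]
  ring

theorem linearized_symmetry_condition (hx : x ≠ 0) (hy : y ≠ 0) :
    prol2 (rhs b) xi eta x y p =
      xi x y * pdx3 (rhs b) x y p + eta x y * pdy3 (rhs b) x y p
        + prol1 (rhs b) xi eta x y p * pdp3 (rhs b) x y p := by
  rw [prol2_xi_eta p hx, prol1_xi_eta p hx, pdx3, pdy3, pdp3, (hasDerivAt_rhs_x b p hx).deriv,
    (hasDerivAt_rhs_y b p hy).deriv, (hasDerivAt_rhs_p b p).deriv]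
  simp only [rhs, xi, eta]
  field_simp
  ring

end PainleveIII

/-- The vector field X₂ = (x ln x - 2x)∂_x + (y ln x)∂_y is an infinitesimal point symmetry of
y'' = y'²/y - y'/x + b/x: the second prolongation annihilates y'' - f on solutions, i.e.
η⁽²⁾ = ξ f_x + η f_y + η⁽¹⁾ f_p. -/
theorem painleveIII_three_zero_infinitesimal_symmetry (b : ℝ) :
    ∀ x > (0 : ℝ), ∀ y : ℝ, y ≠ 0 → ∀ p : ℝ,
      prol2 (fun x y p => p ^ 2 / y - p / x + b / x)
          (fun x _ => x * Real.log x - 2 * x) (fun x y => y * Real.log x) x y p =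
        (x * Real.log x - 2 * x) * pdx3 (fun x y p => p ^ 2 / y - p / x + b / x) x y p
          + (y * Real.log x) * pdy3 (fun x y p => p ^ 2 / y - p / x + b / x) x y p
          + prol1 (fun x y p => p ^ 2 / y - p / x + b / x)
              (fun x _ => x * Real.log x - 2 * x) (fun x y => y * Real.log x) x y p
            * pdp3 (fun x y p => p ^ 2 / y - p / x + b / x) x y p :=
  fun _ hx _ hy p => PainleveIII.linearized_symmetry_condition b p hx.ne' hy
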